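/- arXiv:1409.5934 — 8 statements merged into one kernel-verified Lean document; each statement's English description precedes it below -/
import Mathlib

section
/- Let K be a field and C a K-linear category admitting all small colimits. Let Γ be a small full subcategory of C such that every object of Γ is tiny and Γ spans C. Then the restricted linear Yoneda functor from C to the category of K-linear functors Γᵒᵖ → ModuleCat K, sending an object Y of C to the K-linear presheaf X ↦ Hom_C(X, Y) on Γ, is an equivalence of categories (fully faithful and essentially surjective onto the K-linear functors). -/
open CategoryTheory CategoryTheory.Limits Opposite

universe v u

/-- An object `X` of a `K`-linear category is *tiny* if the `K`-linear hom-functor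
`Hom_C(X, -) : C ⥤ ModuleCat K` preserves all small colimits. -/
def IsTiny (K : Type v) [Field K] {C : Type u} [Category.{v} C] [Preadditive C]
    [CategoryTheory.Linear K C] (X : C) : Prop :=
  Nonempty (PreservesColimits ((linearCoyoneda K C).obj (op X)))

/-- A family of objects `P` *spans* `C` if every object of `C` is the colimit of some small
diagram all of whose objects satisfy `P`. -/
def Spans {C : Type u} [Category.{v} C] (P : C → Prop) : Prop :=
  ∀ Y : C, ∃ (J : Type v) (_ : SmallCategory J) (F : J ⥤ C),
    (∀ j, P (F.obj j)) ∧
      ∃ ι : F ⟶ (Functor.const J).obj Y, Nonempty (IsColimit (Cocone.mk Y ι))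

/-- A presheaf `F : Γᵒᵖ ⥤ ModuleCat K` on a `K`-linear category `Γ` is *`K`-linear* if it is
additive and its action on hom-modules is `K`-linear. -/
def IsLinearPresheaf (K : Type v) [Field K] {Γ : Type*} [Category Γ] [Preadditive Γ]
    [CategoryTheory.Linear K Γ] (F : Γᵒᵖ ⥤ ModuleCat.{v} K) : Prop :=
  F.Additive ∧ ∀ ⦃X Y : Γ⦄ (r : K) (f : X ⟶ Y), F.map (r • f).op = r • F.map f.op

/-- The restricted linear Yoneda functor, sending `Y : C` to the `K`-linear presheaf
`X ↦ Hom_C(X, Y)` on the full subcategory of objects satisfying `P`. -/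
noncomputable def restrictedLinearYoneda (K : Type v) [Field K] (C : Type u) [Category.{v} C]
    [Preadditive C] [CategoryTheory.Linear K C] (P : C → Prop) :
    C ⥤ ((ObjectProperty.FullSubcategory P)ᵒᵖ ⥤ ModuleCat.{v} K) :=
  linearYoneda K C ⋙
    (Functor.whiskeringLeft (ObjectProperty.FullSubcategory P)ᵒᵖ Cᵒᵖ (ModuleCat.{v} K)).obj
      (ObjectProperty.ι P).op


/-!
Full faithfulness: every object `Y` is a colimit of objects of `Γ`, and the tiny objects of `Γ`
see this colimit, so a transformation between restricted hom-presheaves is determined by, and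
assembles from, its values on the colimit legs.

Essential surjectivity: a linear presheaf `G` is realised by the colimit `Y` of the diagram
sending a finite family of elements `xᵢ ∈ G(Aᵢ)` to the biproduct `⨁ Aᵢ`, the morphisms being
the matrices over `Γ` compatible with the elements. As `B ∈ Γ` is tiny, `Hom(B, Y)` is the colimit
of the modules `Hom(B, ⨁ Aᵢ)`, and `f ↦ ∑ G(fᵢ) xᵢ` identifies that colimit with `G(B)`.
Finite families, rather than single elements, make sums and scalar multiples in `G(B)` come from
the diagram, which is what makes this comparison an isomorphism of modules.
-/

universe w

lemma IsTiny.preservesColimitsOfShape {K : Type v} [Field K] {C : Type u} [Category.{v} C]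
    [Preadditive C] [Linear K C] {X : C} (hX : IsTiny K X) (J : Type*) [Category J]
    [EssentiallySmall.{v} J] : PreservesColimitsOfShape J ((linearCoyoneda K C).obj (op X)) :=
  have := hX.some
  preservesColimitsOfShape_of_equiv (equivSmallModel J).symm _

namespace CategoryTheory

namespace Functor.FullyFaithful

variable {C D : Type*} [Category C] [Category D] [Preadditive C] [Preadditive D] {F : C ⥤ D}
  (hF : F.FullyFaithful) {X Y : C}

lemma preimage_add [F.Additive] (f g : F.obj X ⟶ F.obj Y) :
    hF.preimage (f + g) = hF.preimage f + hF.preimage g :=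
  hF.map_injective (by simp)

lemma preimage_zero [F.Additive] : hF.preimage (0 : F.obj X ⟶ F.obj Y) = 0 :=
  hF.map_injective (by simp)

lemma preimage_smul {R : Type*} [Semiring R] [CategoryTheory.Linear R C]
    [CategoryTheory.Linear R D] [F.Linear R] (r : R) (f : F.obj X ⟶ F.obj Y) :
    hF.preimage (r • f) = r • hF.preimage f :=
  hF.map_injective (by simp [Functor.map_smul])

end Functor.FullyFaithful

section

variable {K : Type*} [Ring K] {Γ : Type w} [Category.{v} Γ] [Preadditive Γ]
  (G : Γᵒᵖ ⥤ ModuleCat.{v} K)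

def matAction {M N : Mat_ Γ} (m : M ⟶ N) (y : ∀ j, G.obj (op (N.X j))) (i : M.ι) :
    G.obj (op (M.X i)) :=
  ∑ j, G.map (m i j).op (y j)

variable {G} [G.Additive]

lemma matAction_id (M : Mat_ Γ) (y : ∀ j, G.obj (op (M.X j))) : matAction G (𝟙 M) y = y := by
  funext i
  unfold matAction
  rw [Finset.sum_eq_single i (fun j _ hj => by simp [Mat_.id_apply_of_ne _ _ _ hj.symm])
    (by simp)]
  simp

lemma matAction_comp {M N L : Mat_ Γ} (f : M ⟶ N) (g : N ⟶ L) (z : ∀ k, G.obj (op (L.X k))) :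
    matAction G (f ≫ g) z = matAction G f (matAction G g z) := by
  funext i
  simp only [matAction, Mat_.comp_apply, op_sum, op_comp, Functor.map_sum, Functor.map_comp,
    ModuleCat.hom_sum, ModuleCat.hom_comp, LinearMap.coe_sum, LinearMap.coe_comp,
    Finset.sum_apply, Function.comp_apply, map_sum]
  exact Finset.sum_comm

/-- The additive category of elements of `G`: an object is a finite family of elements
`x i ∈ G (X i)`, and a morphism `O ⟶ O'` is a matrix `m` over `Γ` with
`x i = ∑ j, G (m i j) (x' j)`. Families are indexed by `Fin n` so that this category is
essentially small. -/
structure FinElements (G : Γᵒᵖ ⥤ ModuleCat.{v} K) where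
  n : ℕ
  X : Fin n → Γ
  x : ∀ i, G.obj (op (X i))

namespace FinElements

abbrev toMat (O : FinElements G) : Mat_ Γ := ⟨Fin O.n, O.X⟩

noncomputable instance : Category.{v} (FinElements G) where
  Hom O O' := {m : O.toMat ⟶ O'.toMat // matAction G m O'.x = O.x}
  id O := ⟨𝟙 O.toMat, matAction_id _ _⟩
  comp f g := ⟨f.1 ≫ g.1, by rw [matAction_comp, g.2, f.2]⟩

instance [Small.{v} Γ] : EssentiallySmall.{v} (FinElements G) := by
  have : Small.{v} (FinElements G) := small_of_surjective
    (f := fun s : Σ n, Σ X : Fin n → Γ, ∀ i, G.obj (op (X i)) => ⟨s.1, s.2.1, s.2.2⟩)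
    fun O => ⟨⟨O.n, O.X, O.x⟩, rfl⟩
  exact essentiallySmall_of_small_of_locallySmall _

variable (G) in
abbrev ofElems (B : Γ) {n : ℕ} (x : Fin n → G.obj (op B)) : FinElements G :=
  ⟨n, fun _ => B, x⟩

variable {C : Type w} [Category.{v} C] [Preadditive C] [HasFiniteBiproducts C]
  {ι : Γ ⥤ C} [ι.Additive]

variable (G ι) in
noncomputable abbrev diagram : FinElements G ⥤ C where
  obj O := ⨁ fun i => ι.obj (O.X i)
  map m := biproduct.matrix fun i j => ι.map (m.1 i j)
  map_id O := (Mat_.lift ι).map_id O.toMat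
  map_comp f g := (Mat_.lift ι).map_comp f.1 g.1

variable (hι : ι.FullyFaithful) {B : Γ} {O O' : FinElements G}

lemma diagram_map_π (m : O ⟶ O') (k : Fin O'.n) :
    (diagram G ι).map m ≫ biproduct.π (fun i => ι.obj (O'.X i)) k =
      ∑ j, biproduct.π (fun i => ι.obj (O.X i)) j ≫ ι.map (m.1 j k) :=
  (biproduct.matrix_π _ _).trans biproduct.desc_eq

noncomputable def rowMatrix (f : ι.obj B ⟶ (diagram G ι).obj O) :
    (⟨Fin 1, fun _ => B⟩ : Mat_ Γ) ⟶ O.toMat :=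
  fun _ j => hι.preimage (f ≫ biproduct.π (fun i => ι.obj (O.X i)) j)

lemma rowMatrix_comp_map (f : ι.obj B ⟶ (diagram G ι).obj O) (m : O ⟶ O') :
    rowMatrix hι (f ≫ (diagram G ι).map m) = rowMatrix hι f ≫ m.1 := by
  ext i k
  apply hι.map_injective
  simp only [rowMatrix, Mat_.comp_apply, Functor.map_sum, Functor.map_comp, hι.map_preimage]
  rw [Category.assoc, diagram_map_π, Preadditive.comp_sum]
  simp only [Category.assoc]

noncomputable def pullAlong (f : ι.obj B ⟶ (diagram G ι).obj O) : G.obj (op B) :=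
  matAction G (rowMatrix hι f) O.x 0

lemma pullAlong_comp_map (f : ι.obj B ⟶ (diagram G ι).obj O) (m : O ⟶ O') :
    pullAlong hι (f ≫ (diagram G ι).map m) = pullAlong hι f := by
  rw [pullAlong, rowMatrix_comp_map, matAction_comp, m.2, pullAlong]

lemma pullAlong_map_comp {A : Γ} (g : A ⟶ B) (f : ι.obj B ⟶ (diagram G ι).obj O) :
    pullAlong hι (ι.map g ≫ f) = G.map g.op (pullAlong hι f) := by
  simp [pullAlong, matAction, rowMatrix, hι.preimage_comp]

lemma pullAlong_add (f g : ι.obj B ⟶ (diagram G ι).obj O) :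
    pullAlong hι (f + g) = pullAlong hι f + pullAlong hι g := by
  simp [pullAlong, matAction, rowMatrix, Preadditive.add_comp, hι.preimage_add,
    Finset.sum_add_distrib]

lemma pullAlong_ofElems_ι {n : ℕ} (x : Fin n → G.obj (op B)) (i : Fin n) :
    pullAlong hι (biproduct.ι (fun j => ι.obj ((ofElems G B x).X j)) i) = x i := by
  rw [pullAlong, matAction, Finset.sum_eq_single i]
  · simp [rowMatrix]
  · intro j _ hj
    simp [rowMatrix, biproduct.ι_π_ne _ hj.symm, hι.preimage_zero]
  · simp

noncomputable def toOfElemsPullAlong (f : ι.obj B ⟶ (diagram G ι).obj O) :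
    ofElems G B ![pullAlong hι f] ⟶ O :=
  ⟨rowMatrix hι f, funext fun i => by rw [Subsingleton.elim i 0]; rfl⟩

lemma ι_comp_map_toOfElemsPullAlong (f : ι.obj B ⟶ (diagram G ι).obj O) :
    biproduct.ι _ 0 ≫ (diagram G ι).map (toOfElemsPullAlong hι f) = f := by
  ext j
  simp [toOfElemsPullAlong, rowMatrix, biproduct.ι_matrix]

end FinElements

end

namespace FinElements

variable {K : Type*} [CommRing K] {Γ : Type w} [Category.{v} Γ] [Preadditive Γ]
  {G : Γᵒᵖ ⥤ ModuleCat.{v} K} [G.Additive]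
  {C : Type w} [Category.{v} C] [Preadditive C] [Linear K C] [HasFiniteBiproducts C]
  {ι : Γ ⥤ C} [ι.Additive]

noncomputable def descFun {B : Γ}
    (s : Cocone (diagram G ι ⋙ (linearCoyoneda K C).obj (op (ι.obj B)))) (x : G.obj (op B)) :
    s.pt :=
  s.ι.app (ofElems G B ![x])
    (biproduct.ι (fun _ => ι.obj B) 0 : ι.obj B ⟶ (diagram G ι).obj (ofElems G B ![x]))

lemma cocone_app_eq_descFun_pullAlong (hι : ι.FullyFaithful) {B : Γ} {O : FinElements G}
    (s : Cocone (diagram G ι ⋙ (linearCoyoneda K C).obj (op (ι.obj B))))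
    (f : ι.obj B ⟶ (diagram G ι).obj O) :
    s.ι.app O f = descFun s (pullAlong hι f) := by
  have := ConcreteCategory.congr_hom (s.w (toOfElemsPullAlong hι f))
    (biproduct.ι (fun _ => ι.obj B) 0 :
      ι.obj B ⟶ (diagram G ι).obj (ofElems G B ![pullAlong hι f]))
  exact (congrArg (fun g : ι.obj B ⟶ (diagram G ι).obj O => s.ι.app O g)
    (ι_comp_map_toOfElemsPullAlong hι f).symm).trans this

lemma descFun_add (hι : ι.FullyFaithful) {B : Γ}
    (s : Cocone (diagram G ι ⋙ (linearCoyoneda K C).obj (op (ι.obj B)))) (x y : G.obj (op B)) :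
    descFun s (x + y) = descFun s x + descFun s y := by
  let e (i : Fin 2) : ι.obj B ⟶ (diagram G ι).obj (ofElems G B ![x, y]) :=
    biproduct.ι (fun _ => ι.obj B) i
  have hx : pullAlong hι (e 0) = x := pullAlong_ofElems_ι hι ![x, y] 0
  have hy : pullAlong hι (e 1) = y := pullAlong_ofElems_ι hι ![x, y] 1
  calc descFun s (x + y) = descFun s (pullAlong hι (e 0 + e 1)) := by
        rw [pullAlong_add, hx, hy]
    _ = s.ι.app _ (e 0) + s.ι.app _ (e 1) := by
        rw [← cocone_app_eq_descFun_pullAlong]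
        exact map_add _ _ _
    _ = descFun s x + descFun s y := by
        rw [cocone_app_eq_descFun_pullAlong hι, cocone_app_eq_descFun_pullAlong hι, hx, hy]

lemma pullAlong_smul [Linear K Γ] [ι.Linear K] (hι : ι.FullyFaithful)
    (hG : ∀ ⦃X Y : Γ⦄ (r : K) (f : X ⟶ Y), G.map (r • f).op = r • G.map f.op)
    {B : Γ} {O : FinElements G} (r : K) (f : ι.obj B ⟶ (diagram G ι).obj O) :
    pullAlong hι (r • f) = r • pullAlong hι f := by
  simp [pullAlong, matAction, rowMatrix, hι.preimage_smul, hG, Finset.smul_sum]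

lemma descFun_smul [Linear K Γ] [ι.Linear K] (hι : ι.FullyFaithful)
    (hG : ∀ ⦃X Y : Γ⦄ (r : K) (f : X ⟶ Y), G.map (r • f).op = r • G.map f.op) {B : Γ}
    (s : Cocone (diagram G ι ⋙ (linearCoyoneda K C).obj (op (ι.obj B))))
    (r : K) (x : G.obj (op B)) : descFun s (r • x) = r • descFun s x := by
  let e : ι.obj B ⟶ (diagram G ι).obj (ofElems G B ![x]) := biproduct.ι (fun _ => ι.obj B) 0
  have hx : pullAlong hι e = x := pullAlong_ofElems_ι hι ![x] 0
  calc descFun s (r • x) = descFun s (pullAlong hι (r • e)) := by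
        rw [pullAlong_smul hι hG, hx]
    _ = r • s.ι.app _ e := by
        rw [← cocone_app_eq_descFun_pullAlong]
        exact map_smul _ _ _
    _ = r • descFun s x := by
        rw [cocone_app_eq_descFun_pullAlong hι, hx]

noncomputable def pullCocone [Linear K Γ] [ι.Linear K] (hι : ι.FullyFaithful)
    (hG : ∀ ⦃X Y : Γ⦄ (r : K) (f : X ⟶ Y), G.map (r • f).op = r • G.map f.op) (B : Γ) :
    Cocone (diagram G ι ⋙ (linearCoyoneda K C).obj (op (ι.obj B))) where
  pt := G.obj (op B)
  ι.app O := ModuleCat.ofHom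
    { toFun := pullAlong hι
      map_add' := pullAlong_add hι
      map_smul' := pullAlong_smul hι hG }
  ι.naturality O O' m := by
    ext f
    exact pullAlong_comp_map hι f m

noncomputable def isColimitPullCocone [Linear K Γ] [ι.Linear K] (hι : ι.FullyFaithful)
    (hG : ∀ ⦃X Y : Γ⦄ (r : K) (f : X ⟶ Y), G.map (r • f).op = r • G.map f.op) (B : Γ) :
    IsColimit (pullCocone hι hG B) where
  desc s := ModuleCat.ofHom
    { toFun := descFun s
      map_add' := descFun_add hι s
      map_smul' := descFun_smul hι hG s }
  fac s O := by
    ext f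
    exact (cocone_app_eq_descFun_pullAlong hι s f).symm
  uniq s m hm := by
    ext x
    let e : ι.obj B ⟶ (diagram G ι).obj (ofElems G B ![x]) := biproduct.ι (fun _ => ι.obj B) 0
    have hx : pullAlong hι e = x := pullAlong_ofElems_ι hι ![x] 0
    rw [← hx]
    exact (ConcreteCategory.congr_hom (hm _) e).trans (cocone_app_eq_descFun_pullAlong hι s e)

end FinElements

open FinElements in
theorem exists_linearYoneda_iso_of_isTiny {K : Type v} [Field K] {Γ C : Type w}
    [Category.{v} Γ] [Preadditive Γ] [Linear K Γ] [Small.{v} Γ]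
    [Category.{v} C] [Preadditive C] [Linear K C] [HasColimits C]
    {ι : Γ ⥤ C} [ι.Additive] [ι.Linear K] (hι : ι.FullyFaithful)
    (htiny : ∀ B, IsTiny K (ι.obj B)) (G : Γᵒᵖ ⥤ ModuleCat.{v} K) [G.Additive]
    (hG : ∀ ⦃X Y : Γ⦄ (r : K) (f : X ⟶ Y), G.map (r • f).op = r • G.map f.op) :
    ∃ Y : C, Nonempty (ι.op ⋙ (linearYoneda K C).obj Y ≅ G) := by
  have : HasFiniteBiproducts C := HasFiniteBiproducts.of_hasFiniteCoproducts
  have : HasColimitsOfShape (FinElements G) C := hasColimitsOfShape_of_essentiallySmall _ _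
  let Y := colimit (diagram G ι)
  have hY (B : Γ) : IsColimit (((linearCoyoneda K C).obj (op (ι.obj B))).mapCocone
      (colimit.cocone (diagram G ι))) :=
    have := (htiny B).preservesColimitsOfShape (FinElements G)
    isColimitOfPreserves _ (colimit.isColimit _)
  let e (B : Γ) : ModuleCat.of K (ι.obj B ⟶ Y) ≅ G.obj (op B) :=
    (hY B).coconePointUniqueUpToIso (isColimitPullCocone hι hG B)
  have he (B : Γ) (O : FinElements G) (f : ι.obj B ⟶ (diagram G ι).obj O) :
      (e B).hom (f ≫ colimit.ι (diagram G ι) O) = pullAlong hι f :=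
    ConcreteCategory.congr_hom
      ((hY B).comp_coconePointUniqueUpToIso_hom (isColimitPullCocone hι hG B) O) f
  refine ⟨Y, ⟨NatIso.ofComponents (fun B => e B.unop) fun {A A'} g => ?_⟩⟩
  refine (hY A.unop).hom_ext fun O => ?_
  ext (f : ι.obj A.unop ⟶ (diagram G ι).obj O)
  change (e A'.unop).hom (ι.map g.unop ≫ f ≫ colimit.ι (diagram G ι) O) =
    G.map g ((e A.unop).hom (f ≫ colimit.ι (diagram G ι) O))
  rw [← Category.assoc, he, he, pullAlong_map_comp]
  rfl

end CategoryTheory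

section RestrictedLinearYoneda

variable {K : Type v} [Field K] {C : Type u} [Category.{v} C] [Preadditive C] [Linear K C]
  {P : C → Prop}

lemma restrictedLinearYoneda_naturality_apply {Y Z : C}
    (η : (restrictedLinearYoneda K C P).obj Y ⟶ (restrictedLinearYoneda K C P).obj Z)
    {A B : ObjectProperty.FullSubcategory P} (v : A ⟶ B) (u : B.obj ⟶ Y) :
    η.app (op A) (v.hom ≫ u) = v.hom ≫ η.app (op B) u :=
  ConcreteCategory.congr_hom (η.naturality v.op) u

lemma isLinearPresheaf_restrictedLinearYoneda_obj (Y : C) :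
    IsLinearPresheaf K ((restrictedLinearYoneda K C P).obj Y) := by
  refine ⟨inferInstanceAs ((ObjectProperty.ι P).op ⋙ (linearYoneda K C).obj Y).Additive, ?_⟩
  intro A B r f
  ext u
  exact Linear.smul_comp _ _ _ _ _ _

lemma faithful_restrictedLinearYoneda (hspan : Spans P) :
    (restrictedLinearYoneda K C P).Faithful where
  map_injective {Y Z} f f' h := by
    obtain ⟨J, _, F, hF, c, ⟨hc⟩⟩ := hspan Y
    refine hc.hom_ext fun j => ?_
    have := ConcreteCategory.congr_hom (NatTrans.congr_app h (op ⟨F.obj j, hF j⟩))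
      (c.app j : F.obj j ⟶ Y)
    exact this

lemma full_restrictedLinearYoneda (htiny : ∀ X : C, P X → IsTiny K X) (hspan : Spans P) :
    (restrictedLinearYoneda K C P).Full where
  map_surjective {Y Z} η := by
    obtain ⟨J, _, F, hF, c, ⟨hc⟩⟩ := hspan Y
    let Fj (j : J) : ObjectProperty.FullSubcategory P := ⟨F.obj j, hF j⟩
    let s : Cocone F :=
      { pt := Z
        ι.app j := η.app (op (Fj j)) (c.app j)
        ι.naturality {j j'} a := by
          have := restrictedLinearYoneda_naturality_apply η
            (ObjectProperty.homMk (F.map a) : Fj j ⟶ Fj j') (c.app j')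
          exact (this.symm.trans (congrArg (fun u : F.obj j ⟶ Y => η.app (op (Fj j)) u)
            ((Cocone.mk Y c).w a))).trans (Category.comp_id _).symm }
    refine ⟨hc.desc s, ?_⟩
    ext A : 2
    have := (htiny _ A.unop.property).some
    refine (isColimitOfPreserves ((linearCoyoneda K C).obj (op A.unop.obj)) hc).hom_ext fun j => ?_
    ext (v : A.unop.obj ⟶ F.obj j)
    change (v ≫ c.app j) ≫ hc.desc s = η.app A (v ≫ c.app j)
    rw [Category.assoc, hc.fac s j]
    exact (restrictedLinearYoneda_naturality_apply η
      (ObjectProperty.homMk v : A.unop ⟶ Fj j) (c.app j)).symm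

end RestrictedLinearYoneda

/-- If `Γ` is a small full subcategory of a cocomplete `K`-linear category `C` consisting of
tiny objects and spanning `C`, then the restricted linear Yoneda functor is fully faithful and
essentially surjective onto the `K`-linear presheaves on `Γ`. -/
theorem statement0 (K : Type v) [Field K]
    (C : Type u) [Category.{v} C] [Preadditive C] [CategoryTheory.Linear K C] [HasColimits C]
    (P : C → Prop) [Small.{v} (Subtype P)]
    (htiny : ∀ X : C, P X → IsTiny K X)
    (hspan : Spans P) :
    (restrictedLinearYoneda K C P).Full ∧ (restrictedLinearYoneda K C P).Faithful ∧
      (∀ Y : C, IsLinearPresheaf K ((restrictedLinearYoneda K C P).obj Y)) ∧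
      ∀ G : (ObjectProperty.FullSubcategory P)ᵒᵖ ⥤ ModuleCat.{v} K, IsLinearPresheaf K G →
        ∃ Y : C, Nonempty ((restrictedLinearYoneda K C P).obj Y ≅ G) :=
  ⟨full_restrictedLinearYoneda htiny hspan, faithful_restrictedLinearYoneda hspan,
    isLinearPresheaf_restrictedLinearYoneda_obj, fun G hG =>
      have := hG.1
      exists_linearYoneda_iso_of_isTiny (ObjectProperty.fullyFaithfulι P)
        (fun B => htiny B.obj B.property) G hG.2⟩
end

section
/- Let C be an abelian category admitting all small colimits and let X be an object of C. The functor Hom_C(X,−) : C → AddCommGrp preserves all small colimits if and only if X is compact (i.e., Hom_C(X,−) preserves filtered colimits) and X is a projective object of C. -/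
open CategoryTheory CategoryTheory.Limits Opposite

universe v u

/-!
`Hom(X, -)` is left exact, so it preserves finite colimits exactly when it preserves
epimorphisms, i.e. when `X` is projective. A small colimit is a coequalizer of coproducts, and a
coproduct is the filtered colimit of its finite subcoproducts; hence a functor preserving finite
colimits and filtered colimits preserves all small colimits.
-/

namespace CategoryTheory.Limits

open CoproductsFromFiniteFiltered

universe w v' u'

variable {C : Type u} [Category.{v} C] {D : Type u'} [Category.{v'} D] (G : C ⥤ D)

noncomputable def isColimitMapCofanOfFiniteSubcoproducts {α : Type w} (f : α → C)
    [HasFiniteCoproducts C] [HasColimitsOfShape (Finset (Discrete α)) C] [HasCoproduct f]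
    [PreservesFiniteCoproducts G] [PreservesColimitsOfShape (Finset (Discrete α)) G] :
    IsColimit (Cofan.mk (G.obj (∐ f)) fun a => G.map (Sigma.ι f a)) := by
  have hfiltered := isColimitOfPreserves G (isColimitFiniteSubproductsCocone f)
  have hfinite (S : Finset (Discrete α)) :=
    isColimitOfHasCoproductOfPreservesColimit G fun x : S => (Discrete.functor f).obj x
  have hfac (S : Finset (Discrete α)) {T : D} (k : ∀ x : S, G.obj (f x.1.as) ⟶ T) (x : S) :
      G.map (Sigma.ι _ x) ≫ Cofan.IsColimit.desc (hfinite S) k = k x :=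
    Cofan.IsColimit.fac (hfinite S) k x
  have hinj (S : Finset (Discrete α)) (x : S) :
      Sigma.ι _ x ≫ (finiteSubcoproductsCocone f).ι.app S = Sigma.ι f x.1.as :=
    Sigma.ι_desc _ _
  -- A cofan `t` under `G ∘ f` restricts to cofans under the finite subfamilies; their
  -- descents form a cocone over the filtered diagram, through which `t` then factors.
  refine Cofan.IsColimit.mk _
    (fun t => hfiltered.desc
      { pt := t.pt
        ι :=
          { app S := Cofan.IsColimit.desc (hfinite S) fun x => t.inj x.1.as
            naturality S S' h := (hfinite S).hom_ext fun ⟨x⟩ => by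
              dsimp only [Functor.comp_map, liftToFinsetObj_map, Cofan.mk_ι_app,
                Functor.const_obj_map]
              erw [← G.map_comp_assoc, Sigma.ι_desc, hfac, reassoc_of% hfac S]
              simp } }) ?fac ?uniq
  case fac =>
    intro t a
    change G.map _ ≫ _ = _
    rw [← hinj {⟨a⟩} ⟨⟨a⟩, Finset.mem_singleton_self _⟩]
    erw [G.map_comp_assoc, hfiltered.fac]
    exact hfac _ _ _
  case uniq =>
    intro t m hm
    refine hfiltered.hom_ext fun S => (hfinite S).hom_ext fun ⟨x⟩ => ?_
    erw [hfiltered.fac, ← G.map_comp_assoc, hinj, hfac]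
    exact hm _

lemma preservesColimitsOfShape_discrete_of_preservesFiniteCoproducts (α : Type w)
    [HasFiniteCoproducts C] [HasColimitsOfShape (Finset (Discrete α)) C]
    [PreservesFiniteCoproducts G] [PreservesColimitsOfShape (Finset (Discrete α)) G] :
    PreservesColimitsOfShape (Discrete α) G :=
  have (f : α → C) : PreservesColimit (Discrete.functor f) G :=
    have : HasCoproduct f := ⟨_, (liftToFinsetColimitCocone _).isColimit⟩
    preservesColimit_of_preserves_colimit_cocone (coproductIsCoproduct f)
      ((isColimitMapCoconeCofanMkEquiv G f _).symm
        (isColimitMapCofanOfFiniteSubcoproducts G f))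
  preservesColimitsOfShape_of_discrete G

lemma preservesColimitsOfSize_of_preservesFiniteColimits_of_preservesFilteredColimits
    [HasColimitsOfSize.{w, w} C] [PreservesFiniteColimits G]
    [PreservesFilteredColimitsOfSize.{w, w} G] : PreservesColimitsOfSize.{w, w} G :=
  have (α : Type w) := preservesColimitsOfShape_discrete_of_preservesFiniteCoproducts G α
  preservesColimits_of_preservesCoequalizers_and_coproducts G

end CategoryTheory.Limits

lemma CategoryTheory.preservesFiniteColimits_preadditiveCoyoneda_obj_of_projective
    {C : Type u} [Category.{v} C] [Abelian C] (P : C) [Projective P] :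
    PreservesFiniteColimits (preadditiveCoyoneda.obj (op P)) :=
  have := (Projective.projective_iff_preservesEpimorphisms_preadditiveCoyoneda_obj P).mp ‹_›
  have := (preadditiveCoyoneda.obj (op P)).preservesHomology_of_preservesEpis_and_kernels
  (preadditiveCoyoneda.obj (op P)).preservesFiniteColimits_of_preservesHomology

/-- For an object `X` of a cocomplete abelian category `C`, the hom-functor
`Hom_C(X, −) : C ⥤ AddCommGrp` preserves all small colimits if and only if `X` is compact
(i.e. `Hom_C(X, −)` preserves filtered colimits) and `X` is projective. -/
theorem statement4 (C : Type u) [Category.{v} C] [Abelian C] [HasColimits C] (X : C) :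
    PreservesColimits (preadditiveCoyoneda.obj (op X)) ↔
      PreservesFilteredColimits (preadditiveCoyoneda.obj (op X)) ∧ Projective X := by
  constructor
  · intro _
    rw [Projective.projective_iff_preservesEpimorphisms_preadditiveCoyoneda_obj]
    exact ⟨inferInstance, inferInstance⟩
  · rintro ⟨_, _⟩
    have := preservesFiniteColimits_preadditiveCoyoneda_obj_of_projective X
    exact preservesColimitsOfSize_of_preservesFiniteColimits_of_preservesFilteredColimits _
end

section
/- Let K be a field and let V be a nonzero module over the polynomial ring K[X] on which X acts locally nilpotently, i.e., for every v ∈ V there exists n ∈ ℕ with X^n • v = 0. Then there exist a K[X]-module W on which X acts locally nilpotently and a surjective K[X]-linear map f : W → V that admits no K[X]-linear section, i.e., there is no K[X]-linear map s : V → W with f ∘ s = id_V. (In particular, the category of locally nilpotent K[X]-modules has no nonzero projective objects.) -/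
universe u

/-!
Choose `n v` with `X ^ n v • v = 0` and let `W = ⨁ v, K[X] ⧸ (X ^ (n v + 1))`, the generator
of the `v`-th summand going to `v`. An element of `W` killed by `X` has every component in
`X ^ n v • (K[X] ⧸ (X ^ (n v + 1)))`, which is sent into `X ^ n v • v = 0`. Since `V` is
nonzero and locally nilpotent, it contains some `v₀ ≠ 0` with `X • v₀ = 0`, and a section
would lift `v₀` to an element of `W` killed by `X`, which is sent to `0`.
-/

open Submodule DirectSum

section

variable {R : Type*} [CommRing R] {a : R}

theorem exists_ne_zero_smul_eq_zero_of_pow_smul_eq_zero {M : Type*} [AddCommGroup M]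
    [Module R M] {n : ℕ} {v : M} (hv : v ≠ 0) (h : a ^ n • v = 0) :
    ∃ w : M, w ≠ 0 ∧ a • w = 0 := by
  induction n generalizing v with
  | zero => exact absurd (by simpa using h) hv
  | succ n ih =>
    by_cases hav : a • v = 0
    · exact ⟨v, hv, hav⟩
    · exact ih hav (by rwa [← mul_smul, ← pow_succ])

theorem not_exists_section_of_torsionBy_le_ker {W V : Type*} [AddCommGroup W] [Module R W]
    [AddCommGroup V] [Module R V] {f : W →ₗ[R] V} (hf : torsionBy R W a ≤ LinearMap.ker f)
    {v : V} (hv : v ≠ 0) (hav : a • v = 0) :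
    ¬∃ s : V →ₗ[R] W, f.comp s = LinearMap.id := by
  rintro ⟨s, hs⟩
  have hsv : s v ∈ torsionBy R W a := by
    rw [mem_torsionBy_iff, ← map_smul, hav, map_zero]
  have := LinearMap.congr_fun hs v
  rw [LinearMap.comp_apply, hf hsv, LinearMap.id_apply] at this
  exact hv this.symm

theorem isTorsion'_powers_quotient_span_pow (k : ℕ) :
    Module.IsTorsion' (R ⧸ R ∙ a ^ k) (Submonoid.powers a) := by
  refine (isTorsion'_powers_iff a).mpr fun x => ⟨k, ?_⟩
  obtain ⟨r, rfl⟩ := Submodule.Quotient.mk_surjective _ x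
  rw [← Quotient.mk_smul, Quotient.mk_eq_zero]
  exact mem_span_singleton.mpr ⟨r, mul_comm _ _⟩

theorem isTorsion'_powers_directSum {ι : Type*} [DecidableEq ι] {M : ι → Type*}
    [∀ i, AddCommGroup (M i)] [∀ i, Module R (M i)]
    (h : ∀ i, Module.IsTorsion' (M i) (Submonoid.powers a)) :
    Module.IsTorsion' (⨁ i, M i) (Submonoid.powers a) := by
  simp only [isTorsion'_powers_iff] at h ⊢
  intro w
  induction w using DirectSum.induction_on with
  | zero => exact ⟨0, smul_zero _⟩
  | of i x =>
    obtain ⟨n, hn⟩ := h i x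
    exact ⟨n, by rw [← of_smul, hn, map_zero]⟩
  | add x y hx hy =>
    obtain ⟨m, hm⟩ := hx
    obtain ⟨n, hn⟩ := hy
    refine ⟨n + m, ?_⟩
    rw [smul_add, pow_add, mul_smul, hm, smul_zero, zero_add, mul_comm, mul_smul, hn, smul_zero]

variable {M : Type*} [AddCommGroup M] [Module R M]

def liftQuotSpanPowSucc (m : ℕ) (v : M) (hv : a ^ m • v = 0) :
    (R ⧸ R ∙ a ^ (m + 1)) →ₗ[R] M :=
  liftQSpanSingleton _ (LinearMap.toSpanSingleton R M v) <| by
    rw [LinearMap.toSpanSingleton_apply, pow_succ', mul_smul, hv, smul_zero]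

@[simp]
theorem liftQuotSpanPowSucc_mk (m : ℕ) (v : M) (hv : a ^ m • v = 0) (r : R) :
    liftQuotSpanPowSucc m v hv (Submodule.Quotient.mk r) = r • v :=
  liftQSpanSingleton_apply ..

theorem torsionBy_le_ker_liftQuotSpanPowSucc (ha : IsLeftRegular a) (m : ℕ) (v : M)
    (hv : a ^ m • v = 0) : torsionBy R _ a ≤ LinearMap.ker (liftQuotSpanPowSucc m v hv) := by
  intro x hx
  obtain ⟨r, rfl⟩ := Submodule.Quotient.mk_surjective _ x
  rw [mem_torsionBy_iff, ← Quotient.mk_smul, Quotient.mk_eq_zero, mem_span_singleton] at hx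
  obtain ⟨q, hq⟩ := hx
  have hr : r = q * a ^ m := ha <| show a * r = a * (q * a ^ m) by
    rw [← smul_eq_mul a r, ← hq, smul_eq_mul, pow_succ']; ring
  rw [LinearMap.mem_ker, liftQuotSpanPowSucc_mk, hr, mul_smul, hv, smul_zero]

theorem torsionBy_le_ker_toModule {ι : Type*} [DecidableEq ι] {N : ι → Type*}
    [∀ i, AddCommGroup (N i)] [∀ i, Module R (N i)] {φ : ∀ i, N i →ₗ[R] M}
    (h : ∀ i, torsionBy R (N i) a ≤ LinearMap.ker (φ i)) :
    torsionBy R (⨁ i, N i) a ≤ LinearMap.ker (toModule R ι M φ) := by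
  classical
  intro w hw
  rw [mem_torsionBy_iff] at hw
  rw [LinearMap.mem_ker, ← sum_support_of w, map_sum]
  refine Finset.sum_eq_zero fun i _ => ?_
  rw [← lof_eq_of R, toModule_lof, ← LinearMap.mem_ker]
  exact h i <| (mem_torsionBy_iff _ _).mpr <| by
    rw [← DirectSum.smul_apply, hw, DirectSum.zero_apply]

end

/-- If `V` is a nonzero module over `K[X]` on which `X` acts locally nilpotently, then there
is a locally nilpotent `K[X]`-module `W` and a surjective `K[X]`-linear map `W → V` admitting
no `K[X]`-linear section.  (In particular the category of locally nilpotent `K[X]`-modules has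
no nonzero projective objects.) -/
theorem statement6 (K : Type u) [Field K]
    (V : Type u) [AddCommGroup V] [Module (Polynomial K) V]
    (hV : ∃ v : V, v ≠ 0)
    (hnil : ∀ v : V, ∃ n : ℕ, (Polynomial.X : Polynomial K) ^ n • v = 0) :
    ∃ W : ModuleCat.{u} (Polynomial K),
      (∀ w : W, ∃ n : ℕ, (Polynomial.X : Polynomial K) ^ n • w = 0) ∧
      ∃ f : W →ₗ[Polynomial K] V, Function.Surjective f ∧
        ¬ ∃ s : V →ₗ[Polynomial K] W, f.comp s = LinearMap.id := by
  classical
  choose n hn using hnil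
  obtain ⟨v, hv⟩ := hV
  obtain ⟨v₀, hv₀, hXv₀⟩ := exists_ne_zero_smul_eq_zero_of_pow_smul_eq_zero hv (hn v)
  let W := ⨁ v : V, Polynomial K ⧸ Polynomial K ∙ (Polynomial.X : Polynomial K) ^ (n v + 1)
  let f : W →ₗ[Polynomial K] V :=
    toModule (Polynomial K) V V fun v => liftQuotSpanPowSucc (n v) v (hn v)
  have hW : Module.IsTorsion' W (Submonoid.powers (Polynomial.X : Polynomial K)) :=
    isTorsion'_powers_directSum fun _ => isTorsion'_powers_quotient_span_pow _
  have hf : Function.Surjective f := fun v =>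
    ⟨lof (Polynomial K) V _ v (Submodule.Quotient.mk 1),
      (toModule_lof _ _ _).trans <| (liftQuotSpanPowSucc_mk ..).trans (one_smul _ v)⟩
  have hker : torsionBy (Polynomial K) W (Polynomial.X : Polynomial K) ≤ LinearMap.ker f :=
    torsionBy_le_ker_toModule fun v =>
      torsionBy_le_ker_liftQuotSpanPowSucc Polynomial.isRegular_X.left _ _ _
  exact ⟨ModuleCat.of (Polynomial K) W, (isTorsion'_powers_iff _).mp hW, f, hf,
    not_exists_section_of_torsionBy_le_ker hker hv₀ hXv₀⟩
end

section
/- Let (A_n)_{n∈ℕ} be a sequence of rings together with surjective ring homomorphisms π_n : A_{n+1} → A_n. For each n let M_n and N_n be left A_n-modules, and let p_n : M_{n+1} → M_n and q_n : N_{n+1} → N_n be surjective π_n-semilinear maps satisfying ker p_n = (ker π_n)•M_{n+1} and ker q_n = (ker π_n)•N_{n+1}. Let f_n : M_n → N_n be surjective A_n-linear maps such that f_n ∘ p_n = q_n ∘ f_{n+1} for all n. Then for every m₀ ∈ M₀ with f₀(m₀) = 0 there exists a sequence of elements m_n ∈ M_n, extending the given m₀, such that f_n(m_n) = 0 and p_n(m_{n+1})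 = m_n for all n ∈ ℕ. -/
/-
Lifting one step is a diagram chase: lift `x ∈ ker f_n` along `p_n` to some `z`; then
`f_{n+1} z ∈ ker q_n = I•N_{n+1}`, and since `f_{n+1}` is surjective, `I•N_{n+1}` is the image of
`I•M_{n+1} = ker p_n`, so `z` can be corrected by an element of `ker p_n` to land in `ker f_{n+1}`.
Iterating the step produces the sequence.
-/

universe u v

/-- For a left ideal `I` of a (possibly noncommutative) ring `R` and a left `R`-module `M`,
`idealSmul I M` is the submodule `I•M` of `M` generated by all products `a • m` with
`a ∈ I` and `m ∈ M`. -/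
def idealSmul {R : Type u} [Ring R] (I : Ideal R) (M : Type v) [AddCommGroup M]
    [Module R M] : Submodule R M :=
  Submodule.span R {x : M | ∃ a ∈ I, ∃ m : M, x = a • m}

theorem idealSmul_le_map_of_surjective {R : Type u} [Ring R] (I : Ideal R)
    {M N : Type v} [AddCommGroup M] [Module R M] [AddCommGroup N] [Module R N]
    (f : M →ₗ[R] N) (hf : Function.Surjective f) :
    idealSmul I N ≤ (idealSmul I M).map f := by
  rw [idealSmul, Submodule.span_le]
  rintro _ ⟨a, ha, w, rfl⟩
  obtain ⟨v, rfl⟩ := hf w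
  exact ⟨a • v, Submodule.subset_span ⟨a, ha, v, rfl⟩, map_smul f a v⟩

theorem exists_lift_mem_ker_of_ker_le_map {R R' : Type*} [Ring R] [Ring R'] {σ : R' →+* R}
    {M N M' N' : Type*} [AddCommGroup M] [Module R M] [AddCommGroup N] [Module R N]
    [AddCommGroup M'] [Module R' M'] [AddCommGroup N'] [Module R' N']
    (p : M' →ₛₗ[σ] M) (hp : Function.Surjective p) (q : N' →ₛₗ[σ] N)
    (f : M →ₗ[R] N) (f' : M' →ₗ[R'] N') (hcomm : ∀ x, f (p x) = q (f' x))
    (hker : LinearMap.ker q ≤ (LinearMap.ker p).map f') {x : M} (hx : f x = 0) :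
    ∃ y, f' y = 0 ∧ p y = x := by
  obtain ⟨z, rfl⟩ := hp x
  have hz : f' z ∈ LinearMap.ker q := by rw [LinearMap.mem_ker, ← hcomm, hx]
  obtain ⟨k, hk, hkz⟩ := hker hz
  refine ⟨z - k, by rw [map_sub, hkz, sub_self], ?_⟩
  rw [map_sub, LinearMap.mem_ker.mp hk, sub_zero]

theorem exists_compatible_seq_of_forall_exists_lift {X : ℕ → Type*} (P : ∀ n, X n → Prop)
    (p : ∀ n, X (n + 1) → X n) (lift : ∀ n x, P n x → ∃ y, P (n + 1) y ∧ p n y = x)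
    {x₀ : X 0} (hx₀ : P 0 x₀) :
    ∃ x : ∀ n, X n, x 0 = x₀ ∧ (∀ n, P n (x n)) ∧ ∀ n, p n (x (n + 1)) = x n := by
  choose g hgP hgp using lift
  let x : ∀ n, {y : X n // P n y} :=
    fun n => Nat.rec ⟨x₀, hx₀⟩ (fun k y => ⟨g k y.1 y.2, hgP k y.1 y.2⟩) n
  exact ⟨fun n => (x n).1, rfl, fun n => (x n).2, fun n => hgp n (x n).1 (x n).2⟩

theorem statement8_general
    (A : ℕ → Type u) [∀ n, Ring (A n)]
    (π : ∀ n, A (n + 1) →+* A n)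
    (M N : ℕ → Type v)
    [∀ n, AddCommGroup (M n)] [∀ n, Module (A n) (M n)]
    [∀ n, AddCommGroup (N n)] [∀ n, Module (A n) (N n)]
    (p : ∀ n, M (n + 1) →ₛₗ[π n] M n) (hp : ∀ n, Function.Surjective (p n))
    (hkerp : ∀ n, LinearMap.ker (p n) = idealSmul (RingHom.ker (π n)) (M (n + 1)))
    (q : ∀ n, N (n + 1) →ₛₗ[π n] N n)
    (hkerq : ∀ n, LinearMap.ker (q n) = idealSmul (RingHom.ker (π n)) (N (n + 1)))
    (f : ∀ n, M n →ₗ[A n] N n) (hf : ∀ n, Function.Surjective (f n))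
    (hcomm : ∀ n (x : M (n + 1)), f n (p n x) = q n (f (n + 1) x))
    (m₀ : M 0) (hm₀ : f 0 m₀ = 0) :
    ∃ m : ∀ n, M n, m 0 = m₀ ∧ (∀ n, f n (m n) = 0) ∧ ∀ n, p n (m (n + 1)) = m n := by
  refine exists_compatible_seq_of_forall_exists_lift (fun n x => f n x = 0) (fun n => p n)
    (fun n _ hx => ?_) hm₀
  refine exists_lift_mem_ker_of_ker_le_map (p n) (hp n) (q n) (f n) (f (n + 1)) (hcomm n) ?_ hx
  rw [hkerp, hkerq]
  exact idealSmul_le_map_of_surjective _ (f (n + 1)) (hf (n + 1))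

/-- Given surjective ring maps `π n : A (n+1) → A n`, modules `M n`, `N n` over `A n` with
surjective semilinear transition maps whose kernels are `(ker π n)•M (n+1)` resp.
`(ker π n)•N (n+1)`, and compatible surjective `A n`-linear maps `f n : M n → N n`, every
element of `ker (f 0)` extends to a compatible sequence of elements of the kernels. -/
theorem statement8
    (A : ℕ → Type u) [∀ n, Ring (A n)]
    (π : ∀ n, A (n + 1) →+* A n) (hπ : ∀ n, Function.Surjective (π n))
    (M N : ℕ → Type v)
    [∀ n, AddCommGroup (M n)] [∀ n, Module (A n) (M n)]
    [∀ n, AddCommGroup (N n)] [∀ n, Module (A n) (N n)]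
    (p : ∀ n, M (n + 1) →ₛₗ[π n] M n) (hp : ∀ n, Function.Surjective (p n))
    (hkerp : ∀ n, LinearMap.ker (p n) = idealSmul (RingHom.ker (π n)) (M (n + 1)))
    (q : ∀ n, N (n + 1) →ₛₗ[π n] N n) (hq : ∀ n, Function.Surjective (q n))
    (hkerq : ∀ n, LinearMap.ker (q n) = idealSmul (RingHom.ker (π n)) (N (n + 1)))
    (f : ∀ n, M n →ₗ[A n] N n) (hf : ∀ n, Function.Surjective (f n))
    (hcomm : ∀ n (x : M (n + 1)), f n (p n x) = q n (f (n + 1) x))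
    (m₀ : M 0) (hm₀ : f 0 m₀ = 0) :
    ∃ m : ∀ n, M n, m 0 = m₀ ∧ (∀ n, f n (m n) = 0) ∧ ∀ n, p n (m (n + 1)) = m n :=
  statement8_general A π M N p hp hkerp q hkerq f hf hcomm m₀ hm₀
end

section
/- Let (A_n)_{n∈ℕ} be a sequence of rings with surjective ring homomorphisms π_n : A_{n+1} → A_n, and for each n let N_n be a left A_n-module with surjective π_n-semilinear maps q_n : N_{n+1} → N_n satisfying ker q_n = (ker π_n)•N_{n+1}. Let N̂ be the set of compatible sequences x = (x_n)_{n∈ℕ} with x_n ∈ N_n and q_n(x_{n+1}) = x_n, and for each n let ε_n : (N̂ →₀ A_n) → N_n be the A_n-linear map sending a finitely supported family (a_x)_{x∈N̂} to Σ_x a_x • x_n. Then: (i) each ε_n is surjective; and (ii) if K̂ denotes the set of sequences k = (k_n)_{n∈ℕ} with k_n ∈ ker ε_n ⊆ (N̂ →₀ A_n) and with k_n obtained from k_{n+1} by applying π_n to each coefficient, then the A_n-linear map δ_n : (K̂ →₀ A_n) → (N̂ →₀ A_n) sending (b_k)_{k∈K̂} to Σ_k b_k • k_n has image exactly ker ε_n.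 In particular, for every n the sequence (K̂ →₀ A_n) → (N̂ →₀ A_n) → N_n → 0 is exact. -/
/-!
In a tower of surjections every element at level `n` is the `n`-th term of a compatible
sequence; applied to the `N n` this makes each `ε n` onto. The inclusion
`ker q n ≤ (ker π n)•N (n+1)` is exactly what lets an element `u` of `ker ε n` be lifted into
`ker ε (n+1)`: lift its coefficients arbitrarily to `v`; then `ε (n+1) v ∈ (ker π n)•N (n+1)`
is the image of a family `w` with coefficients in `ker π n`, and `v - w` is the lift. So the
kernels again form a tower of surjections, and `u` is the `n`-th term of some `k ∈ K̂`.
-/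

universe u v

section

variable (A : ℕ → Type u) [∀ n, Ring (A n)] (π : ∀ n, A (n + 1) →+* A n)
  (N : ℕ → Type v) [∀ n, AddCommGroup (N n)] [∀ n, Module (A n) (N n)]
  (q : ∀ n, N (n + 1) →ₛₗ[π n] N n)

/-- `N̂`: the set of compatible sequences `(x n)` with `x n ∈ N n` and `q n (x (n+1)) = x n`. -/
def CompatSeq : Type v :=
  { x : ∀ n, N n // ∀ n, q n (x (n + 1)) = x n }

/-- `ε n : (N̂ →₀ A n) → N n`, sending a finitely supported family `(a x)` to `Σ a x • x n`. -/
noncomputable def eps (n : ℕ) : (CompatSeq A π N q →₀ A n) →ₗ[A n] N n :=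
  Finsupp.linearCombination (A n) fun x => x.1 n

/-- `K̂`: the set of compatible sequences of kernel elements `k n ∈ ker (ε n)`, where `k n`
is obtained from `k (n+1)` by applying `π n` to each coefficient. -/
def KerSeq : Type (max u v) :=
  { k : ∀ n, (CompatSeq A π N q →₀ A n) //
      (∀ n, k n ∈ LinearMap.ker (eps A π N q n)) ∧
      ∀ n, Finsupp.mapRange (π n) (map_zero (π n)) (k (n + 1)) = k n }

/-- `δ n : (K̂ →₀ A n) → (N̂ →₀ A n)`, sending `(b k)` to `Σ b k • k n`. -/
noncomputable def delta (n : ℕ) :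
    (KerSeq A π N q →₀ A n) →ₗ[A n] (CompatSeq A π N q →₀ A n) :=
  Finsupp.linearCombination (A n) fun k => k.1 n

theorem exists_compatible_seq_of_surjective {T : ℕ → Type*} (d : ∀ m, T (m + 1) → T m)
    (hd : ∀ m, Function.Surjective (d m)) (n : ℕ) (t : T n) :
    ∃ s : ∀ m, T m, (∀ m, d m (s (m + 1)) = s m) ∧ s n = t := by
  induction n generalizing T with
  | zero =>
    choose lift hlift using hd
    exact ⟨fun m => Nat.rec (motive := T) t lift m, fun m => hlift m _, rfl⟩
  | succ n ih =>
    -- lift in the shifted tower `m ↦ T (m + 1)`, then put `d 0` of its bottom entry in front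
    obtain ⟨s, hs, hsn⟩ := 
      ih (T := fun m => T (m + 1)) (fun m => d (m + 1)) (fun m => hd (m + 1)) t
    refine ⟨fun m => Nat.casesOn (motive := T) m (d 0 (s 0)) s, fun m => ?_, hsn⟩
    cases m with
    | zero => rfl
    | succ m => exact hs m

theorem exists_compatSeq_apply_eq (hq : ∀ n, Function.Surjective (q n)) (n : ℕ) (x : N n) :
    ∃ c : CompatSeq A π N q, c.1 n = x :=
  let ⟨s, hs, hsn⟩ := exists_compatible_seq_of_surjective (fun m => q m) hq n x
  ⟨⟨s, hs⟩, hsn⟩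

theorem eps_single (n : ℕ) (c : CompatSeq A π N q) (a : A n) :
    eps A π N q n (Finsupp.single c a) = a • c.1 n :=
  Finsupp.linearCombination_single _ _ _

theorem eps_surjective (hq : ∀ n, Function.Surjective (q n)) (n : ℕ) :
    Function.Surjective (eps A π N q n) := fun x => by
  obtain ⟨c, rfl⟩ := exists_compatSeq_apply_eq A π N q hq n x
  exact ⟨Finsupp.single c 1, by rw [eps_single, one_smul]⟩

noncomputable def reduceCoeffs (S : Type*) (n : ℕ) :
    (S →₀ A (n + 1)) →ₛₗ[π n] (S →₀ A n) :=
  Finsupp.mapRange.linearMap (π n).toSemilinearMap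

theorem reduceCoeffs_apply (S : Type*) (n : ℕ) (v : S →₀ A (n + 1)) :
    reduceCoeffs A π S n v = Finsupp.mapRange (π n) (map_zero (π n)) v :=
  rfl

theorem eps_reduceCoeffs (n : ℕ) (v : CompatSeq A π N q →₀ A (n + 1)) :
    eps A π N q n (reduceCoeffs A π _ n v) = q n (eps A π N q (n + 1) v) := by
  induction v using Finsupp.induction_linear with
  | zero => simp
  | add v w hv hw => rw [map_add, map_add, hv, hw, map_add, map_add]
  | single c a => rw [reduceCoeffs_apply, Finsupp.mapRange_single, eps_single, eps_single,
      map_smulₛₗ, c.2 n]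

theorem idealSmul_le_map_eps_ker_reduceCoeffs (hq : ∀ n, Function.Surjective (q n)) (n : ℕ) :
    idealSmul (RingHom.ker (π n)) (N (n + 1)) ≤
      (LinearMap.ker (reduceCoeffs A π (CompatSeq A π N q) n)).map (eps A π N q (n + 1)) := by
  refine Submodule.span_le.2 ?_
  rintro _ ⟨a, ha, x, rfl⟩
  obtain ⟨c, rfl⟩ := exists_compatSeq_apply_eq A π N q hq (n + 1) x
  refine ⟨Finsupp.single c a, ?_, eps_single A π N q (n + 1) c a⟩
  rw [SetLike.mem_coe, LinearMap.mem_ker, reduceCoeffs_apply, Finsupp.mapRange_single,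
    RingHom.mem_ker.1 ha, Finsupp.single_zero]

theorem exists_mem_ker_eps_reduceCoeffs_eq (hπ : ∀ n, Function.Surjective (π n))
    (hq : ∀ n, Function.Surjective (q n))
    (hker : ∀ n, LinearMap.ker (q n) ≤ idealSmul (RingHom.ker (π n)) (N (n + 1)))
    (n : ℕ) {u : CompatSeq A π N q →₀ A n} (hu : u ∈ LinearMap.ker (eps A π N q n)) :
    ∃ v ∈ LinearMap.ker (eps A π N q (n + 1)), reduceCoeffs A π _ n v = u := by
  obtain ⟨v, rfl⟩ := Finsupp.mapRange_surjective (π n) (map_zero (π n)) (hπ n) u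
  have hv : eps A π N q (n + 1) v ∈ LinearMap.ker (q n) := by
    rw [LinearMap.mem_ker, ← eps_reduceCoeffs]
    exact hu
  obtain ⟨w, hw, hwv⟩ := idealSmul_le_map_eps_ker_reduceCoeffs A π N q hq n (hker n hv)
  refine ⟨v - w, by rw [LinearMap.mem_ker, map_sub, hwv, sub_self], ?_⟩
  rw [map_sub, LinearMap.mem_ker.1 hw, sub_zero, reduceCoeffs_apply]

theorem exists_kerSeq_apply_eq (hπ : ∀ n, Function.Surjective (π n))
    (hq : ∀ n, Function.Surjective (q n))
    (hker : ∀ n, LinearMap.ker (q n) ≤ idealSmul (RingHom.ker (π n)) (N (n + 1)))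
    (n : ℕ) {u : CompatSeq A π N q →₀ A n} (hu : u ∈ LinearMap.ker (eps A π N q n)) :
    ∃ k : KerSeq A π N q, k.1 n = u := by
  let d : ∀ m, LinearMap.ker (eps A π N q (m + 1)) → LinearMap.ker (eps A π N q m) :=
    fun m v => ⟨reduceCoeffs A π _ m v, by
      rw [LinearMap.mem_ker, eps_reduceCoeffs, LinearMap.mem_ker.1 v.2, map_zero]⟩
  have hd : ∀ m, Function.Surjective (d m) := fun m u => by
    obtain ⟨v, hv, hvu⟩ := exists_mem_ker_eps_reduceCoeffs_eq A π N q hπ hq hker m u.2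
    exact ⟨⟨v, hv⟩, Subtype.ext hvu⟩
  obtain ⟨s, hs, hsn⟩ := exists_compatible_seq_of_surjective
    (T := fun m => LinearMap.ker (eps A π N q m)) d hd n ⟨u, hu⟩
  exact ⟨⟨fun m => s m, fun m => (s m).2, fun m => congrArg Subtype.val (hs m)⟩,
    congrArg Subtype.val hsn⟩

theorem delta_single (n : ℕ) (k : KerSeq A π N q) (b : A n) :
    delta A π N q n (Finsupp.single k b) = b • k.1 n :=
  Finsupp.linearCombination_single _ _ _

/-- With surjective transition maps whose kernels are `(ker π n)•N (n+1)`: each `ε n` is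
surjective and the image of `δ n` is exactly `ker (ε n)`; in particular for every `n` the
sequence `(K̂ →₀ A n) → (N̂ →₀ A n) → N n → 0` is exact. -/
theorem statement9 (hπ : ∀ n, Function.Surjective (π n))
    (hq : ∀ n, Function.Surjective (q n))
    (hker : ∀ n, LinearMap.ker (q n) = idealSmul (RingHom.ker (π n)) (N (n + 1))) :
    (∀ n, Function.Surjective (eps A π N q n)) ∧
    ∀ n, LinearMap.range (delta A π N q n) = LinearMap.ker (eps A π N q n) := by
  refine ⟨eps_surjective A π N q hq, fun n => le_antisymm ?_ fun u hu => ?_⟩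
  · rw [delta, Finsupp.range_linearCombination, Submodule.span_le]
    rintro _ ⟨k, rfl⟩
    exact k.2.1 n
  · obtain ⟨k, rfl⟩ := exists_kerSeq_apply_eq A π N q hπ hq (fun n => (hker n).le) n hu
    exact ⟨Finsupp.single k 1, by rw [delta_single, one_smul]⟩

end
end

section
/- Let R be a commutative ring and let F : ModuleCat R → ModuleCat R be an additive, R-linear functor that preserves all small colimits. Then F is naturally isomorphic to the functor M ↦ M ⊗_R F(R), i.e., to tensoring on the right with the R-module F(R) (Eilenberg–Watts). -/
/-!
Linearity of `F` makes `m ⊗ x ↦ F(r ↦ r • m)(x)` a natural map `M ⊗ F(R) ⟶ F(M)`, which at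
`M = R` is the left unitor. Both functors preserve coproducts and cokernels, so this map is an
isomorphism on free modules, and then on every module, as a cokernel of a map of free modules.
-/

open CategoryTheory CategoryTheory.Limits MonoidalCategory TensorProduct

universe u

namespace ModuleCat

variable {R : Type u} [CommRing R]

section NatTransOnFreeModules

variable {D : Type*} [Category D] {G H : ModuleCat.{u} R ⥤ D} (τ : G ⟶ H)

lemma isIso_app_finsupp_of_isIso_app_self (ι : Type u)
    [PreservesColimitsOfShape (Discrete ι) G] [PreservesColimitsOfShape (Discrete ι) H]
    [IsIso (τ.app (of R R))] : IsIso (τ.app (of R (ι →₀ R))) := by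
  have : IsIso (Functor.whiskerLeft (Discrete.functor fun _ : ι ↦ of R R) τ) :=
    (NatTrans.isIso_iff_isIso_app _).2 fun _ ↦ inferInstanceAs (IsIso (τ.app (of R R)))
  exact isIso_app_coconePt_of_preservesColimit _ τ _ (finsuppCoconeIsColimit R R ι)

lemma isIso_of_isIso_app_finsupp [PreservesColimitsOfShape WalkingParallelPair G]
    [PreservesColimitsOfShape WalkingParallelPair H]
    (hfree : ∀ ι : Type u, IsIso (τ.app (of R (ι →₀ R)))) : IsIso τ := by
  refine (NatTrans.isIso_iff_isIso_app τ).2 fun M ↦ ?_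
  let pres := Module.Presentation.tautological R M
  let f : of R (pres.R →₀ R) ⟶ of R (pres.G →₀ R) := ofHom pres.map
  have : IsIso (Functor.whiskerLeft (parallelPair f 0) τ) :=
    (NatTrans.isIso_iff_isIso_app _).2 fun j ↦ by cases j <;> exact hfree _
  exact isIso_app_coconePt_of_preservesColimit _ τ _
    (isColimitCokernelCofork f (ofHom pres.π) pres.exact pres.surjective_π)

end NatTransOnFreeModules

section EilenbergWatts

variable (F : ModuleCat.{u} R ⥤ ModuleCat.{u} R) [F.Additive] [F.Linear R]

noncomputable def eilenbergWattsApp (M : ModuleCat.{u} R) :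
    M ⊗ F.obj (of R R) ⟶ F.obj M :=
  ofHom <| TensorProduct.lift <|
    homLinearEquiv.toLinearMap ∘ₗ F.mapLinearMap R ∘ₗ homLinearEquiv.symm.toLinearMap ∘ₗ
      (LinearMap.ringLmapEquivSelf R R M).symm.toLinearMap

@[simp]
lemma eilenbergWattsApp_tmul (M : ModuleCat.{u} R) (m : M) (x : F.obj (of R R)) :
    eilenbergWattsApp F M (m ⊗ₜ x) = F.map (ofHom (LinearMap.toSpanSingleton R M m)) x :=
  rfl

noncomputable def eilenbergWatts : tensorRight (F.obj (of R R)) ⟶ F where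
  app := eilenbergWattsApp F
  naturality M N f := by
    ext : 1
    refine TensorProduct.ext' fun m x ↦ ?_
    have : ofHom (LinearMap.toSpanSingleton R N (f m)) =
        ofHom (LinearMap.toSpanSingleton R M m) ≫ f := by
      ext; simp
    change eilenbergWattsApp F N (f m ⊗ₜ x) = F.map f (eilenbergWattsApp F M (m ⊗ₜ x))
    simp [this]

lemma eilenbergWatts_app_self : (eilenbergWatts F).app (of R R) = (λ_ (F.obj (of R R))).hom := by
  ext : 1
  refine TensorProduct.ext' fun (r : R) x ↦ ?_
  have : ofHom (LinearMap.toSpanSingleton R (of R R) r) = r • 𝟙 (of R R) := by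
    ext; simp [mul_comm]
  change eilenbergWattsApp F (of R R) (r ⊗ₜ x) = (λ_ (F.obj (of R R))).hom (r ⊗ₜ x)
  rw [eilenbergWattsApp_tmul, this, F.map_smul, F.map_id, MonoidalCategory.leftUnitor_hom_apply]
  rfl

instance : IsIso ((eilenbergWatts F).app (of R R)) := by
  rw [eilenbergWatts_app_self]
  infer_instance

end EilenbergWatts

end ModuleCat

/-- Eilenberg–Watts: a colimit-preserving `R`-linear functor `ModuleCat R ⥤ ModuleCat R` is
naturally isomorphic to tensoring with the `R`-module `F(R)`. -/
theorem statement11 (R : Type u) [CommRing R]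
    (F : ModuleCat.{u} R ⥤ ModuleCat.{u} R) [F.Additive] [F.Linear R]
    [PreservesColimits F] :
    Nonempty (F ≅ MonoidalCategory.tensorRight (F.obj (ModuleCat.of R R))) := by
  have : IsIso (ModuleCat.eilenbergWatts F) :=
    ModuleCat.isIso_of_isIso_app_finsupp _ fun ι ↦
      ModuleCat.isIso_app_finsupp_of_isIso_app_self _ ι
  exact ⟨(asIso (ModuleCat.eilenbergWatts F)).symm⟩
end

section
/- Let K be a field, A a finite-dimensional associative unital K-algebra, and S a finite-dimensional left A-module. Call a surjective A-linear map f : T → S essential if no proper A-submodule T' ⊊ T satisfies f(T') = S. Then there exists d ∈ ℕ such that every finite-dimensional left A-module T admitting an essential surjection onto S satisfies dim_K T ≤ d. -/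
universe u

/-! Lifting a `K`-basis `b` of `S` through `f` gives vectors whose `A`-span maps onto `S`;
by essentiality that span is all of `T`. So `T` is a quotient of `A ^ n` with
`n = dim_K S`, whence `dim_K T ≤ dim_K S * dim_K A`. -/

open Module Submodule

theorem Module.finrank_le_card_mul_finrank_of_span_eq_top (K : Type*) {A T ι : Type*} [Field K]
    [Ring A] [Algebra K A] [FiniteDimensional K A] [AddCommGroup T] [Module K T] [Module A T]
    [IsScalarTower K A T] [Fintype ι] {t : ι → T} (ht : span A (Set.range t) = ⊤) :
    finrank K T ≤ Fintype.card ι * finrank K A :=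
  calc finrank K T ≤ finrank K (ι → A) := LinearMap.finrank_le_finrank_of_surjective
        (f := (Fintype.linearCombination A t).restrictScalars K)
        ((span_range_eq_top_iff_surjective_fintypeLinearCombination A t).mp ht)
    _ = Fintype.card ι * finrank K A := by simp [finrank_pi_fintype]

theorem Submodule.span_range_eq_top_of_forall_map_ne_top {A T S ι : Type*} [Ring A]
    [AddCommGroup T] [Module A T] [AddCommGroup S] [Module A S] {f : T →ₗ[A] S}
    (hf : ∀ T' : Submodule A T, T' ≠ ⊤ → map f T' ≠ ⊤) {t : ι → T}
    (ht : span A (Set.range (f ∘ t)) = ⊤) : span A (Set.range t) = ⊤ := by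
  by_contra hne
  exact hf _ hne (by rwa [map_span, ← Set.range_comp])

/-- Over a finite-dimensional algebra `A` over a field `K`, the dimensions of the
finite-dimensional `A`-modules `T` admitting an essential surjection onto a fixed
finite-dimensional `A`-module `S` are uniformly bounded. -/
theorem statement12 (K : Type u) [Field K] (A : Type u) [Ring A] [Algebra K A]
    [FiniteDimensional K A]
    (S : Type u) [AddCommGroup S] [Module K S] [Module A S] [IsScalarTower K A S]
    [FiniteDimensional K S] :
    ∃ d : ℕ, ∀ (T : Type u) [AddCommGroup T] [Module K T] [Module A T] [IsScalarTower K A T]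
      [FiniteDimensional K T] (f : T →ₗ[A] S),
      Function.Surjective f →
      (∀ T' : Submodule A T, T' ≠ ⊤ → Submodule.map f T' ≠ ⊤) →
      Module.finrank K T ≤ d := by
  refine ⟨finrank K S * finrank K A, fun T _ _ _ _ _ f hsurj hess => ?_⟩
  let b := Module.finBasis K S
  choose t ht using fun i => hsurj (b i)
  have hb : span A (Set.range (f ∘ t)) = ⊤ := by
    rw [show f ∘ t = b from funext ht]
    exact span_eq_top_of_span_eq_top K A _ b.span_eq
  simpa using finrank_le_card_mul_finrank_of_span_eq_top K
    (span_range_eq_top_of_forall_map_ne_top hess hb)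
end

section
/- Let K be a field, C a K-linear category admitting all small colimits, and Γ a small full subcategory of C such that every object of Γ is tiny and Γ spans C. Let D be any K-linear category admitting all small colimits. Then restriction along the inclusion Γ ↪ C defines an equivalence between the category of colimit-preserving K-linear functors C → D (with all natural transformations as morphisms) and the category of K-linear functors Γ → D (with all natural transformations as morphisms). -/
open CategoryTheory CategoryTheory.Limits Opposite

universe v u u'

/-- A functor between `K`-linear categories is *`K`-linear* if it is additive and its action
on hom-modules is `K`-linear. -/
def IsLinearFunctor (K : Type v) [Field K] {C : Type*} {D : Type*} [Category C] [Category D]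
    [Preadditive C] [Preadditive D] [CategoryTheory.Linear K C] [CategoryTheory.Linear K D]
    (F : C ⥤ D) : Prop :=
  F.Additive ∧ ∀ ⦃X Y : C⦄ (r : K) (f : X ⟶ Y), F.map (r • f) = r • F.map f

variable (K : Type v) [Field K] (C : Type u) [Category.{v} C] [Preadditive C]
  [CategoryTheory.Linear K C] [HasColimits C]
  (D : Type u') [Category.{v} D] [Preadditive D] [CategoryTheory.Linear K D] [HasColimits D]
  (P : C → Prop)

/-- Restriction along the inclusion of the full subcategory on `P`, viewed as a functor from
the category of colimit-preserving `K`-linear functors `C ⥤ D` to the category of `K`-linear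
functors `Γ ⥤ D`. -/
noncomputable def restrictionFunctor :
    ObjectProperty.FullSubcategory (fun F : C ⥤ D => IsLinearFunctor K F ∧ PreservesColimits F) ⥤
      ObjectProperty.FullSubcategory
        (fun G : ObjectProperty.FullSubcategory P ⥤ D => IsLinearFunctor K G) :=
  ObjectProperty.lift _
    (ObjectProperty.ι _ ⋙
      (Functor.whiskeringLeft (ObjectProperty.FullSubcategory P) C D).obj (ObjectProperty.ι P))
    (by
      rintro ⟨F, ⟨hadd, hsmul⟩, _⟩
      constructor
      · haveI := hadd
        dsimp
        infer_instance
      · intro X Y r f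
        exact hsmul r f.hom)

/-!
For a linear `G : Γ ⥤ D`, the value at `Y` of the extension of `G` is forced to be the colimit of
`G` weighted by `Hom_C(ι -, Y)`: an object `E` with a natural family of linear maps
`Hom_C(X, Y) → Hom_D(G X, E)`, `X ∈ Γ`, through which every such family factors uniquely.
Write `Y` as a colimit of objects `X_j ∈ Γ`. Since every `X ∈ Γ` is tiny,
`Hom_C(X, Y) = colim_j Hom_C(X, X_j)`, so a natural family on `Y` is a compatible system of
families on the `X_j`, and by Yoneda these are cocones on `j ↦ G X_j`. Hence `colim_j G X_j` is
the weighted colimit, and so is `F Y` for `G = F ∘ ι` when `F` is linear and preserves colimits.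
The first statement makes the weighted colimits into a linear colimit-preserving functor
restricting to `G` (essential surjectivity); the second shows that natural transformations out of
such an `F` are determined by, and extend uniquely from, their components on `Γ` (full
faithfulness).
-/

section Tiny

variable {K : Type v} [Field K] {C : Type u} [Category.{v} C] [Preadditive C] [Linear K C]
  {X : C} {J : Type v} [Category.{v} J] {H : J ⥤ C} {c : Cocone H}
  {N : Type v} [AddCommGroup N] [Module K N]

lemma IsTiny.linearMap_ext (hX : IsTiny K X) (hc : IsColimit c) {f g : (X ⟶ c.pt) →ₗ[K] N}
    (h : ∀ j (u : X ⟶ H.obj j), f (u ≫ c.ι.app j) = g (u ≫ c.ι.app j)) : f = g :=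
  have := hX.some
  congrArg ModuleCat.Hom.hom <|
    (isColimitOfPreserves ((linearCoyoneda K C).obj (op X)) hc).hom_ext
      (f := ModuleCat.ofHom f) (f' := ModuleCat.ofHom g) fun j => by ext u; exact h j u

def coconeOfLinearMaps (f : ∀ j, (X ⟶ H.obj j) →ₗ[K] N)
    (hf : ∀ ⦃j j'⦄ (φ : j ⟶ j') (u : X ⟶ H.obj j), f j' (u ≫ H.map φ) = f j u) :
    Cocone (H ⋙ (linearCoyoneda K C).obj (op X)) where
  pt := ModuleCat.of K N
  ι := { app j := ModuleCat.ofHom (f j)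
         naturality j j' φ := by ext u; exact hf φ u }

noncomputable def IsTiny.descLinear (hX : IsTiny K X) (hc : IsColimit c)
    (f : ∀ j, (X ⟶ H.obj j) →ₗ[K] N)
    (hf : ∀ ⦃j j'⦄ (φ : j ⟶ j') (u : X ⟶ H.obj j), f j' (u ≫ H.map φ) = f j u) :
    (X ⟶ c.pt) →ₗ[K] N :=
  have := hX.some
  ((isColimitOfPreserves ((linearCoyoneda K C).obj (op X)) hc).desc (coconeOfLinearMaps f hf)).hom

lemma IsTiny.descLinear_comp_ι (hX : IsTiny K X) (hc : IsColimit c)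
    (f : ∀ j, (X ⟶ H.obj j) →ₗ[K] N)
    (hf : ∀ ⦃j j'⦄ (φ : j ⟶ j') (u : X ⟶ H.obj j), f j' (u ≫ H.map φ) = f j u)
    (j : J) (u : X ⟶ H.obj j) : hX.descLinear hc f hf (u ≫ c.ι.app j) = f j u :=
  have := hX.some
  congr($((isColimitOfPreserves ((linearCoyoneda K C).obj (op X)) hc).fac
    (coconeOfLinearMaps f hf) j).hom u)

end Tiny

def IsLinearFunctor.mapLinearMap {K : Type v} [Field K] {C : Type*} {D : Type*} [Category C]
    [Category D] [Preadditive C] [Preadditive D] [Linear K C] [Linear K D] {F : C ⥤ D}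
    (hF : IsLinearFunctor K F) (X Y : C) : (X ⟶ Y) →ₗ[K] (F.obj X ⟶ F.obj Y) where
  toFun := F.map
  map_add' _ _ := hF.1.map_add
  map_smul' _ _ := hF.2 _ _

open ObjectProperty

lemma Spans.exists_isColimit {C : Type u} [Category.{v} C] {P : C → Prop} (hspan : Spans P)
    (Y : C) : ∃ (J : Type v) (_ : SmallCategory J) (H : J ⥤ FullSubcategory P)
      (π : H ⋙ ι P ⟶ (Functor.const J).obj Y), Nonempty (IsColimit (Cocone.mk Y π)) := by
  obtain ⟨J, _, F, hF, π, hc⟩ := hspan Y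
  exact ⟨J, _, lift P F hF, π, hc⟩

section WeightedColimits

variable {K : Type v} [Field K] {C : Type u} [Category.{v} C] [Preadditive C] [Linear K C]
  {D : Type u'} [Category.{v} D] [Preadditive D] [Linear K D] {P : C → Prop}

variable (K) in
/-- A natural transformation `Hom_C(ι -, Y) ⟶ Hom_D(G -, T)` of `K`-linear presheaves on the
full subcategory `ι : FullSubcategory P ⥤ C`. -/
structure WeightedCocone (G : FullSubcategory P ⥤ D) (Y : C) (T : D) where
  app (X : FullSubcategory P) : (X.obj ⟶ Y) →ₗ[K] (G.obj X ⟶ T)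
  naturality {X X' : FullSubcategory P} (u : X ⟶ X') (g : X'.obj ⟶ Y) :
    app X (u.hom ≫ g) = G.map u ≫ app X' g

namespace WeightedCocone

variable {G : FullSubcategory P ⥤ D} {Y Y' : C} {T T' : D}

@[ext]
lemma ext {φ ψ : WeightedCocone K G Y T} (h : ∀ X (g : X.obj ⟶ Y), φ.app X g = ψ.app X g) :
    φ = ψ := by
  obtain ⟨φ, _⟩ := φ
  obtain ⟨ψ, _⟩ := ψ
  congr
  exact funext fun X => LinearMap.ext (h X)

def postcomp (φ : WeightedCocone K G Y T) (m : T ⟶ T') : WeightedCocone K G Y T' where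
  app X := Linear.rightComp K (G.obj X) m ∘ₗ φ.app X
  naturality u g := by simp [φ.naturality]

@[simp]
lemma postcomp_app_apply (φ : WeightedCocone K G Y T) (m : T ⟶ T') (X : FullSubcategory P)
    (g : X.obj ⟶ Y) : (φ.postcomp m).app X g = φ.app X g ≫ m :=
  rfl

def precomp (φ : WeightedCocone K G Y' T) (f : Y ⟶ Y') : WeightedCocone K G Y T where
  app X := φ.app X ∘ₗ Linear.rightComp K X.obj f
  naturality u g := by simp [← φ.naturality]

@[simp]
lemma precomp_app_apply (φ : WeightedCocone K G Y' T) (f : Y ⟶ Y') (X : FullSubcategory P)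
    (g : X.obj ⟶ Y) : (φ.precomp f).app X g = φ.app X (g ≫ f) :=
  rfl

def comap {G' : FullSubcategory P ⥤ D} (φ : WeightedCocone K G' Y T) (γ : G ⟶ G') :
    WeightedCocone K G Y T where
  app X := Linear.leftComp K T (γ.app X) ∘ₗ φ.app X
  naturality u g := by simp [φ.naturality]

@[simp]
lemma comap_app_apply {G' : FullSubcategory P ⥤ D} (φ : WeightedCocone K G' Y T) (γ : G ⟶ G')
    (X : FullSubcategory P) (g : X.obj ⟶ Y) : (φ.comap γ).app X g = γ.app X ≫ φ.app X g :=
  rfl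

def ofFunctor {F : C ⥤ D} (hF : IsLinearFunctor K F) (Y : C) :
    WeightedCocone K (ι P ⋙ F) Y (F.obj Y) where
  app X := hF.mapLinearMap X.obj Y
  naturality u g := F.map_comp u.hom g

@[simp]
lemma ofFunctor_app_apply {F : C ⥤ D} (hF : IsLinearFunctor K F) (Y : C)
    (X : FullSubcategory P) (g : X.obj ⟶ Y) : (ofFunctor hF Y).app X g = F.map g :=
  rfl

def yoneda (hG : IsLinearFunctor K G) (X : FullSubcategory P) :
    WeightedCocone K G X.obj (G.obj X) where
  app _ :=
    { toFun g := G.map (homMk g)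
      map_add' _ _ := hG.1.map_add
      map_smul' _ _ := hG.2 _ _ }
  naturality u g := G.map_comp u (homMk g)

@[simp]
lemma yoneda_app_apply (hG : IsLinearFunctor K G) (X X' : FullSubcategory P)
    (g : X'.obj ⟶ X.obj) : (yoneda hG X).app X' g = G.map (homMk g) :=
  rfl

@[simp]
lemma yoneda_app_id (hG : IsLinearFunctor K G) (X : FullSubcategory P) :
    (yoneda hG X).app X (𝟙 X.obj) = 𝟙 (G.obj X) :=
  G.map_id X

end WeightedCocone

open WeightedCocone

section

variable {G : FullSubcategory P ⥤ D} {Y : C} {E T : D}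

def IsWeightedColimit (φ : WeightedCocone K G Y E) : Prop :=
  ∀ T : D, Function.Bijective fun m : E ⟶ T => φ.postcomp m

namespace IsWeightedColimit

variable {φ : WeightedCocone K G Y E} (h : IsWeightedColimit φ)
include h

lemma hom_ext {m m' : E ⟶ T}
    (hm : ∀ X (g : X.obj ⟶ Y), φ.app X g ≫ m = φ.app X g ≫ m') : m = m' :=
  (h T).1 (WeightedCocone.ext hm)

noncomputable def desc (ψ : WeightedCocone K G Y T) : E ⟶ T :=
  ((h T).2 ψ).choose

lemma postcomp_desc (ψ : WeightedCocone K G Y T) : φ.postcomp (h.desc ψ) = ψ :=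
  ((h T).2 ψ).choose_spec

lemma fac (ψ : WeightedCocone K G Y T) (X : FullSubcategory P) (g : X.obj ⟶ Y) :
    φ.app X g ≫ h.desc ψ = ψ.app X g :=
  congr($(h.postcomp_desc ψ).app X g)

lemma fac_assoc (ψ : WeightedCocone K G Y T) (X : FullSubcategory P) (g : X.obj ⟶ Y) {T' : D}
    (m : T ⟶ T') : φ.app X g ≫ h.desc ψ ≫ m = ψ.app X g ≫ m := by
  rw [← Category.assoc, h.fac]

end IsWeightedColimit

noncomputable def IsWeightedColimit.isoObj {X : FullSubcategory P}
    {φ : WeightedCocone K G X.obj T} (h : IsWeightedColimit φ) (hG : IsLinearFunctor K G) :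
    T ≅ G.obj X where
  hom := h.desc (yoneda hG X)
  inv := φ.app X (𝟙 X.obj)
  hom_inv_id := h.hom_ext fun X' g => by
    rw [h.fac_assoc, yoneda_app_apply, ← φ.naturality]
    simp
  inv_hom_id := by rw [h.fac, yoneda_app_id]

namespace WeightedCocone

variable (htiny : ∀ X : C, P X → IsTiny K X) {J : Type v} [Category.{v} J] {H : J ⥤ C}
  {c : Cocone H} (hc : IsColimit c)
include htiny hc

lemma ext_of_isColimit {φ ψ : WeightedCocone K G c.pt T}
    (h : ∀ j, φ.precomp (c.ι.app j) = ψ.precomp (c.ι.app j)) : φ = ψ :=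
  ext fun X => LinearMap.congr_fun <| (htiny _ X.2).linearMap_ext hc fun j u =>
    congr($(h j).app X u)

noncomputable def glue (ψ : ∀ j, WeightedCocone K G (H.obj j) T)
    (hψ : ∀ ⦃j j'⦄ (f : j ⟶ j'), (ψ j').precomp (H.map f) = ψ j) :
    WeightedCocone K G c.pt T where
  app X := (htiny _ X.2).descLinear hc (fun j => (ψ j).app X) fun _ _ f u =>
    congr($(hψ f).app X u)
  naturality {X X'} v g := by
    refine LinearMap.congr_fun ((htiny _ X'.2).linearMap_ext hc
      (f := _ ∘ₗ Linear.leftComp K c.pt v.hom) (g := Linear.leftComp K T (G.map v) ∘ₗ _)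
      fun j u => ?_) g
    simp only [LinearMap.comp_apply, Linear.leftComp_apply, ← Category.assoc,
      IsTiny.descLinear_comp_ι, (ψ j).naturality]

lemma precomp_glue (ψ : ∀ j, WeightedCocone K G (H.obj j) T)
    (hψ : ∀ ⦃j j'⦄ (f : j ⟶ j'), (ψ j').precomp (H.map f) = ψ j) (j : J) :
    (glue htiny hc ψ hψ).precomp (c.ι.app j) = ψ j :=
  ext fun X u => (htiny _ X.2).descLinear_comp_ι hc _ _ j u

end WeightedCocone

lemma isWeightedColimit_of_isColimit (htiny : ∀ X : C, P X → IsTiny K X) {J : Type v}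
    [Category.{v} J] {H : J ⥤ FullSubcategory P} {c : Cocone (H ⋙ ι P)} (hc : IsColimit c)
    {d : Cocone (H ⋙ G)} (hd : IsColimit d) (φ : WeightedCocone K G c.pt d.pt)
    (hφ : ∀ j, φ.app (H.obj j) (c.ι.app j) = d.ι.app j) :
    IsWeightedColimit φ := by
  have hφ' (j : J) (X : FullSubcategory P) (w : X.obj ⟶ (H.obj j).obj) :
      φ.app X (w ≫ c.ι.app j) = G.map (homMk w) ≫ d.ι.app j := by
    rw [← hφ, ← φ.naturality]
    rfl
  refine fun T => ⟨fun m m' hm => hd.hom_ext fun j => ?_, fun ψ => ?_⟩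
  · rw [← hφ]
    exact congr($hm |>.app (H.obj j) (c.ι.app j))
  · let s : Cocone (H ⋙ G) :=
      { pt := T
        ι := { app j := ψ.app (H.obj j) (c.ι.app j)
               naturality j j' f := by
                 simpa [← ψ.naturality] using congr(ψ.app (H.obj j) $(c.w f)) } }
    refine ⟨hd.desc s, ext_of_isColimit htiny hc fun j => ext fun X w => ?_⟩
    simp only [precomp_app_apply, postcomp_app_apply, hφ', Category.assoc, hd.fac]
    exact (ψ.naturality (homMk w) _).symm

lemma exists_isWeightedColimit [HasColimits D] (htiny : ∀ X : C, P X → IsTiny K X)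
    (hspan : Spans P) (hG : IsLinearFunctor K G) (Y : C) :
    ∃ (E : D) (φ : WeightedCocone K G Y E), IsWeightedColimit φ := by
  obtain ⟨J, _, H, π, ⟨hc⟩⟩ := hspan.exists_isColimit Y
  let ψ (j : J) : WeightedCocone K G (H.obj j).obj (colimit (H ⋙ G)) :=
    (yoneda hG (H.obj j)).postcomp (colimit.ι (H ⋙ G) j)
  have hψ ⦃j j' : J⦄ (f : j ⟶ j') : (ψ j').precomp (H.map f).hom = ψ j := by
    ext X g
    simp only [ψ, precomp_app_apply, postcomp_app_apply, yoneda_app_apply]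
    rw [← colimit.w (H ⋙ G) f, Functor.comp_map, ← Category.assoc, ← G.map_comp]
    rfl
  refine ⟨_, glue htiny hc ψ hψ, isWeightedColimit_of_isColimit htiny hc (colimit.isColimit _) _
    fun j => ?_⟩
  simpa [ψ, -yoneda_app_apply] using
    congr($(precomp_glue htiny hc ψ hψ j).app (H.obj j) (𝟙 _))

lemma isWeightedColimit_ofFunctor (htiny : ∀ X : C, P X → IsTiny K X) (hspan : Spans P)
    {F : C ⥤ D} (hF : IsLinearFunctor K F) [PreservesColimits F] (Y : C) :
    IsWeightedColimit (P := P) (ofFunctor hF Y) := by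
  obtain ⟨J, _, H, π, ⟨hc⟩⟩ := hspan.exists_isColimit Y
  exact isWeightedColimit_of_isColimit (G := ι P ⋙ F) htiny hc (isColimitOfPreserves F hc)
    (ofFunctor hF Y) fun _ => rfl

end

section Extension

variable {G : FullSubcategory P ⥤ D} {E : C → D} {φ : ∀ Y, WeightedCocone K G Y (E Y)}
  (h : ∀ Y, IsWeightedColimit (φ Y))

noncomputable abbrev extension : C ⥤ D where
  obj := E
  map {Y Y'} f := (h Y).desc ((φ Y').precomp f)
  map_id Y := (h Y).hom_ext fun X g => by simp [(h Y).fac]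
  map_comp {Y Y' Y''} f f' := (h Y).hom_ext fun X g => by simp [(h _).fac, (h _).fac_assoc]

lemma extension_map_fac {Y Y' : C} (f : Y ⟶ Y') (X : FullSubcategory P) (g : X.obj ⟶ Y) :
    (φ Y).app X g ≫ (extension h).map f = (φ Y').app X (g ≫ f) :=
  (h Y).fac _ X g

lemma extension_map_fac_assoc {Y Y' : C} (f : Y ⟶ Y') (X : FullSubcategory P) (g : X.obj ⟶ Y)
    {T : D} (m : E Y' ⟶ T) :
    (φ Y).app X g ≫ (extension h).map f ≫ m = (φ Y').app X (g ≫ f) ≫ m :=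
  (h Y).fac_assoc _ X g m

lemma extension_isLinearFunctor : IsLinearFunctor K (extension h) :=
  ⟨⟨fun {Y _ _ _} => (h Y).hom_ext fun X g => by
      simp [(h Y).fac, Preadditive.comp_add]⟩,
    fun Y _ _ _ => (h Y).hom_ext fun X g => by simp [(h Y).fac, Linear.comp_smul]⟩

noncomputable def isColimitExtensionMapCocone (htiny : ∀ X : C, P X → IsTiny K X)
    {J : Type v} [Category.{v} J] {H : J ⥤ C} {c : Cocone H} (hc : IsColimit c) :
    IsColimit ((extension h).mapCocone c) :=
  let ψ (s : Cocone (H ⋙ extension h)) (j : J) : WeightedCocone K G (H.obj j) s.pt :=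
    (φ (H.obj j)).postcomp (s.ι.app j)
  have hψ (s : Cocone (H ⋙ extension h)) ⦃j j' : J⦄ (f : j ⟶ j') :
      (ψ s j').precomp (H.map f) = ψ s j := ext fun X g => by
    simp only [ψ, precomp_app_apply, postcomp_app_apply, ← extension_map_fac_assoc h]
    exact congrArg _ (s.w f)
  have postcomp_eq (s : Cocone (H ⋙ extension h)) (m : E c.pt ⟶ s.pt)
      (hm : ∀ j, (extension h).map (c.ι.app j) ≫ m = s.ι.app j) :
      (φ c.pt).postcomp m = glue htiny hc (ψ s) (hψ s) :=
    ext_of_isColimit htiny hc fun j => by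
      rw [precomp_glue]
      ext X g
      simp only [ψ, precomp_app_apply, postcomp_app_apply, ← hm j, extension_map_fac_assoc h]
      rfl
  { desc s := (h c.pt).desc (glue htiny hc (ψ s) (hψ s))
    fac s j := (h (H.obj j)).hom_ext fun X g => by
      rw [Functor.mapCocone_ι_app, extension_map_fac_assoc, (h c.pt).fac]
      exact congr($(precomp_glue htiny hc (ψ s) (hψ s) j).app X g)
    uniq s m hm := (h c.pt _).1 <| (postcomp_eq s m hm).trans ((h c.pt).postcomp_desc _).symm }

lemma preservesColimits_extension (htiny : ∀ X : C, P X → IsTiny K X) :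
    PreservesColimits (extension h) :=
  ⟨⟨⟨fun hc => ⟨isColimitExtensionMapCocone h htiny hc⟩⟩⟩⟩

noncomputable def extensionRestrictIso (hG : IsLinearFunctor K G) : ι P ⋙ extension h ≅ G :=
  NatIso.ofComponents (fun X => (h X.obj).isoObj hG)
    fun {X X'} u => (h X.obj).hom_ext fun X'' g => by
      simp only [IsWeightedColimit.isoObj, Functor.comp_map, ι_map, (h _).fac_assoc, (h _).fac,
        precomp_app_apply, yoneda_app_apply]
      exact G.map_comp (homMk g) u

end Extension

section Restriction

variable {A B : C ⥤ D}
  {hA : IsLinearFunctor K A} (hA' : ∀ Y, IsWeightedColimit (P := P) (ofFunctor hA Y))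

include hA' in
lemma natTrans_ext_of_isWeightedColimit {α β : A ⟶ B}
    (h : Functor.whiskerLeft (ι P) α = Functor.whiskerLeft (ι P) β) : α = β :=
  NatTrans.ext <| funext fun Y => (hA' Y).hom_ext fun X g => by
    change A.map g ≫ α.app Y = A.map g ≫ β.app Y
    rw [α.naturality, β.naturality, show α.app X.obj = β.app X.obj from congr_app h X]

noncomputable def extendNatTrans (hB : IsLinearFunctor K B) (γ : ι P ⋙ A ⟶ ι P ⋙ B) :
    A ⟶ B where
  app Y := (hA' Y).desc ((ofFunctor hB Y).comap γ)
  naturality Y Y' f := (hA' Y).hom_ext fun X g => by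
    have h₁ := (hA' Y').fac ((ofFunctor hB Y').comap γ) X (g ≫ f)
    have h₂ := (hA' Y).fac ((ofFunctor hB Y).comap γ) X g
    simp only [ofFunctor_app_apply, comap_app_apply, Functor.map_comp, Category.assoc]
      at h₁ h₂ ⊢
    rw [h₁, reassoc_of% h₂]

lemma whiskerLeft_extendNatTrans (hB : IsLinearFunctor K B) (γ : ι P ⋙ A ⟶ ι P ⋙ B) :
    Functor.whiskerLeft (ι P) (extendNatTrans hA' hB γ) = γ := by
  ext X
  have h : A.map (𝟙 X.obj) ≫ (extendNatTrans hA' hB γ).app X.obj =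
      γ.app X ≫ B.map (𝟙 X.obj) :=
    (hA' X.obj).fac _ X (𝟙 X.obj)
  simpa using h

end Restriction

lemma restrictionFunctor_faithful (htiny : ∀ X : C, P X → IsTiny K X) (hspan : Spans P) :
    (restrictionFunctor K C D P).Faithful where
  map_injective {A _} _ _ h :=
    have := A.property.2
    hom_ext _ <| natTrans_ext_of_isWeightedColimit
      (isWeightedColimit_ofFunctor htiny hspan A.property.1) congr($(h).hom)

lemma restrictionFunctor_full (htiny : ∀ X : C, P X → IsTiny K X) (hspan : Spans P) :
    (restrictionFunctor K C D P).Full where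
  map_surjective {A B} γ :=
    have := A.property.2
    ⟨homMk (extendNatTrans (isWeightedColimit_ofFunctor htiny hspan A.property.1) B.property.1
      γ.hom), hom_ext _ (whiskerLeft_extendNatTrans _ _ _)⟩

lemma restrictionFunctor_essSurj [HasColimits D] (htiny : ∀ X : C, P X → IsTiny K X)
    (hspan : Spans P) :
    (restrictionFunctor K C D P).EssSurj where
  mem_essImage G := by
    choose E φ hφ using exists_isWeightedColimit htiny hspan G.property
    exact ⟨⟨extension hφ, extension_isLinearFunctor hφ,
      preservesColimits_extension hφ htiny⟩, ⟨isoMk _ (extensionRestrictIso hφ G.property)⟩⟩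

end WeightedColimits

theorem statement13
    (htiny : ∀ X : C, P X → IsTiny K X) (hspan : Spans P) :
    (restrictionFunctor K C D P).IsEquivalence :=
  { faithful := restrictionFunctor_faithful htiny hspan
    full := restrictionFunctor_full htiny hspan
    essSurj := restrictionFunctor_essSurj htiny hspan }
end
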